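/- Let X̄ ∈ R^{n×p} have orthonormal columns, G ∈ R^{n×p}, γ > 0, and Z = X̄^T G - γ I_p with SVD Z = U Σ V^T. Set Q = -U V^T and X⁺ = X̄ Q. Then ⟨G, X⁺ - X̄⟩ + (γ/2)‖X⁺ - X̄‖_F^2 = -tr(Σ + U Σ V^T) ≤ 0. -/

import Mathlib

/-! For any orthogonal `Q`, the step `X̄ Q - X̄ = X̄ (Q - I)` has `‖X̄ Q - X̄‖² = 2 tr I - 2 tr Q`, so
the left-hand side equals `tr(Zᵀ Q) - tr Z`; for `Q = -U Vᵀ` this is `-tr Σ - tr(U Σ Vᵀ)`. Moreover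
`tr(U Σ Vᵀ) = ∑ σᵢ (Vᵀ U)ᵢᵢ ≥ -∑ σᵢ`, since the entries of the orthogonal matrix `Vᵀ U` lie in
`[-1, 1]`. -/

open Matrix BigOperators

noncomputable def frobSq {m n : Type*} [Fintype m] [Fintype n] (A : Matrix m n ℝ) : ℝ :=
  ∑ i, ∑ j, (A i j) ^ 2

noncomputable def minner {m n : Type*} [Fintype m] [Fintype n]
    (A B : Matrix m n ℝ) : ℝ := Matrix.trace (Aᵀ * B)

lemma frobSq_eq_trace {m n : Type*} [Fintype m] [Fintype n] (A : Matrix m n ℝ) :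
    frobSq A = trace (Aᵀ * A) := by
  simp only [frobSq, trace, diag, mul_apply, transpose_apply, sq]
  exact Finset.sum_comm

section

variable {m n : Type*} [Fintype m] [Fintype n] [DecidableEq n]

lemma neg_one_le_apply_of_transpose_mul_self {O : Matrix n n ℝ} (hO : Oᵀ * O = 1) (i j : n) :
    -1 ≤ O i j := by
  have hU : O ∈ unitaryGroup n ℝ := by
    rwa [mem_unitaryGroup_iff', star_eq_conjTranspose, conjTranspose_eq_transpose_of_trivial]
  exact neg_le_of_abs_le (entry_norm_bound_of_unitary hU i j)

lemma neg_trace_diagonal_le_trace_diagonal_mul {d : n → ℝ} (hd : ∀ i, 0 ≤ d i) {O : Matrix n n ℝ}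
    (hO : Oᵀ * O = 1) : -trace (diagonal d) ≤ trace (diagonal d * O) := by
  simp only [trace, diag, diagonal_apply_eq, diagonal_mul, ← Finset.sum_neg_distrib]
  gcongr with i
  linarith [mul_le_mul_of_nonneg_left (neg_one_le_apply_of_transpose_mul_self hO i i) (hd i)]

lemma minner_add_frobSq_mul_sub {Xb G : Matrix m n ℝ} (hXb : Xbᵀ * Xb = 1) {Q : Matrix n n ℝ}
    (hQ : Qᵀ * Q = 1) (γ : ℝ) :
    minner G (Xb * Q - Xb) + (γ / 2) * frobSq (Xb * Q - Xb) =
      trace ((Xbᵀ * G - γ • 1)ᵀ * Q) - trace (Xbᵀ * G - γ • 1) := by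
  have hstep : Xb * Q - Xb = Xb * (Q - 1) := by rw [Matrix.mul_sub, Matrix.mul_one]
  have hfrob : frobSq (Xb * Q - Xb) = 2 * trace (1 : Matrix n n ℝ) - 2 * trace Q := by
    rw [frobSq_eq_trace, hstep, transpose_mul, Matrix.mul_assoc, ← Matrix.mul_assoc Xbᵀ,
      hXb, Matrix.one_mul, transpose_sub, transpose_one, sub_mul, mul_sub, mul_sub, hQ]
    simp only [Matrix.one_mul, Matrix.mul_one, trace_sub, trace_transpose]
    ring
  have hinner : minner G (Xb * Q - Xb) = trace ((Xbᵀ * G)ᵀ * Q) - trace (Xbᵀ * G) := by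
    rw [minner, hstep, ← Matrix.mul_assoc, Matrix.mul_sub, Matrix.mul_one, trace_sub, transpose_mul,
      transpose_transpose, ← trace_transpose (Gᵀ * Xb), transpose_mul, transpose_transpose]
  rw [hinner, hfrob, transpose_sub, sub_mul, trace_sub, trace_sub, transpose_smul, transpose_one,
    smul_mul, Matrix.one_mul, trace_smul, trace_smul, smul_eq_mul, smul_eq_mul]
  ring

end

theorem stmt_12_general (n p : ℕ) (γ : ℝ)
    (Xb Xp G : Matrix (Fin n) (Fin p) ℝ)
    (U S V : Matrix (Fin p) (Fin p) ℝ)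
    (hXb : Xbᵀ * Xb = 1) (hU : Uᵀ * U = 1) (hV : Vᵀ * V = 1)
    (hSd : ∀ i j, i ≠ j → S i j = 0) (hS0 : ∀ i, 0 ≤ S i i)
    (hZ : Xbᵀ * G - γ • 1 = U * S * Vᵀ)
    (hXp : Xp = Xb * (-(U * Vᵀ))) :
    minner G (Xp - Xb) + (γ / 2) * frobSq (Xp - Xb) =
        -Matrix.trace (S + U * S * Vᵀ) ∧
      -Matrix.trace (S + U * S * Vᵀ) ≤ 0 := by
  have hVVt : V * Vᵀ = 1 := mul_eq_one_comm.mp hV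
  have hQ : (-(U * Vᵀ))ᵀ * -(U * Vᵀ) = 1 := by
    rw [transpose_neg, neg_mul_neg, transpose_mul, transpose_transpose, Matrix.mul_assoc,
      ← Matrix.mul_assoc Uᵀ, hU, Matrix.one_mul, hVVt]
  have hO : (Vᵀ * U)ᵀ * (Vᵀ * U) = 1 := by
    rw [transpose_mul, transpose_transpose, Matrix.mul_assoc, ← Matrix.mul_assoc V, hVVt,
      Matrix.one_mul, hU]
  refine ⟨?_, ?_⟩
  · have hZQ : trace ((U * S * Vᵀ)ᵀ * (U * Vᵀ)) = trace S := by
      simp only [transpose_mul, transpose_transpose, Matrix.mul_assoc]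
      rw [← Matrix.mul_assoc Uᵀ, hU, Matrix.one_mul, trace_mul_comm, Matrix.mul_assoc, hV,
        Matrix.mul_one, trace_transpose]
    rw [hXp, minner_add_frobSq_mul_sub hXb hQ γ, hZ, Matrix.mul_neg, trace_neg, hZQ, trace_add]
    ring
  · have hS : diagonal S.diag = S := IsDiag.diagonal_diag hSd
    have key := neg_trace_diagonal_le_trace_diagonal_mul (d := S.diag) hS0 hO
    rw [hS] at key
    rw [trace_add, trace_mul_cycle, trace_mul_comm]
    linarith

theorem stmt_12 (n p : ℕ) (γ : ℝ) (hγ : 0 < γ)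
    (Xb Xp G : Matrix (Fin n) (Fin p) ℝ)
    (U S V : Matrix (Fin p) (Fin p) ℝ)
    (hXb : Xbᵀ * Xb = 1) (hU : Uᵀ * U = 1) (hV : Vᵀ * V = 1)
    (hSd : ∀ i j, i ≠ j → S i j = 0) (hS0 : ∀ i, 0 ≤ S i i)
    (hZ : Xbᵀ * G - γ • 1 = U * S * Vᵀ)
    (hXp : Xp = Xb * (-(U * Vᵀ))) :
    minner G (Xp - Xb) + (γ / 2) * frobSq (Xp - Xb) =
        -Matrix.trace (S + U * S * Vᵀ) ∧
      -Matrix.trace (S + U * S * Vᵀ) ≤ 0 :=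
  stmt_12_general n p γ Xb Xp G U S V hXb hU hV hSd hS0 hZ hXp
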